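/- Let t > 0 and let γ_t be the Gaussian measure on ℝ with mean 0 and variance t. Then for every s ∈ ℝ and every f ∈ L²(ℝ; ℂ) with ‖f‖_{H^{s+2}} < ∞, the averaged propagator deviation satisfies ∫_ℝ ‖(S_x f) − f‖_{H^s}² dγ_t(x) ≤ t · ‖f‖_{H^{s+2}}² (this is the estimate E‖(S(r,t_n) − I)g‖²_{H^s} ≲ (r − t_n) ‖g‖²_{H^{s+2}} for the random Schrödinger propagator with Brownian increment distributed as γ_t, used throughout the error analyses). -/

import Mathlib

open MeasureTheory Complex Real
open scoped ENNReal NNReal FourierTransform ComplexConjugate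

noncomputable section

/-- `L²(ℝ; ℂ)`. -/
abbrev L2 : Type := Lp ℂ 2 (volume : Measure ℝ)

/-- `F` is the Fourier–Plancherel transform on `L²(ℝ; ℂ)`: a unitary operator that agrees
with the Fourier integral `𝓕 f (ξ) = ∫ e^{−2πixξ} f(x) dx` on `L¹ ∩ L²`. -/
def IsFourierPlancherel (F : L2 ≃ₗᵢ[ℂ] L2) : Prop :=
  ∀ (f : ℝ → ℂ) (_ : Integrable f (volume : Measure ℝ))
    (hf2 : MemLp f 2 (volume : Measure ℝ)),
    (F (hf2.toLp f) : ℝ → ℂ) =ᵐ[volume] 𝓕 f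

/-- Multiplication by a bounded continuous symbol maps `L²` to `L²`. -/
lemma memℒp_mul_symbol (m : ℝ → ℂ) (hm : Continuous m) (hm1 : ∀ ξ, ‖m ξ‖ ≤ 1)
    (g : L2) : MemLp (fun ξ => m ξ * (g : ℝ → ℂ) ξ) 2 (volume : Measure ℝ) := by
  refine ⟨hm.aestronglyMeasurable.mul (Lp.aestronglyMeasurable g), ?_⟩
  refine lt_of_le_of_lt (eLpNorm_mono fun x => ?_) (Lp.eLpNorm_lt_top g)
  rw [norm_mul]
  calc ‖m x‖ * ‖(g : ℝ → ℂ) x‖ ≤ 1 * ‖(g : ℝ → ℂ) x‖ := by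
        gcongr; exact hm1 x
    _ = ‖(g : ℝ → ℂ) x‖ := one_mul _

/-- The Fourier multiplier operator `f ↦ 𝓕⁻¹ (m ⬝ 𝓕 f)` with bounded continuous symbol. -/
def fourierMult (F : L2 ≃ₗᵢ[ℂ] L2) (m : ℝ → ℂ) (hm : Continuous m)
    (hm1 : ∀ ξ, ‖m ξ‖ ≤ 1) (f : L2) : L2 :=
  F.symm ((memℒp_mul_symbol m hm hm1 (F f)).toLp _)

/-- The squared `H^s` norm `‖f‖²_{H^s} = ∫ (1+|ξ|²)^s |𝓕f(ξ)|² dξ ∈ [0,∞]`. -/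
def HsNormSq (F : L2 ≃ₗᵢ[ℂ] L2) (s : ℝ) (f : L2) : ℝ≥0∞ :=
  ∫⁻ ξ : ℝ, ENNReal.ofReal ((1 + |ξ| ^ 2) ^ s) * (‖(F f : ℝ → ℂ) ξ‖₊ : ℝ≥0∞) ^ 2

/-- The `H^s` norm `‖f‖_{H^s} ∈ [0,∞]`. -/
def HsNorm (F : L2 ≃ₗᵢ[ℂ] L2) (s : ℝ) (f : L2) : ℝ≥0∞ :=
  HsNormSq F s f ^ (1 / 2 : ℝ)

lemma Sprop_symbol_cont (τ : ℝ) :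
    Continuous fun ξ : ℝ => Complex.exp (-Complex.I * (τ : ℂ) * (ξ : ℂ) ^ 2) := by
  fun_prop

lemma Sprop_symbol_norm (τ : ℝ) (ξ : ℝ) :
    ‖Complex.exp (-Complex.I * (τ : ℂ) * (ξ : ℂ) ^ 2)‖ ≤ 1 := by
  have h : -Complex.I * (τ : ℂ) * (ξ : ℂ) ^ 2 = ((-(τ * ξ ^ 2) : ℝ) : ℂ) * Complex.I := by
    push_cast; ring
  rw [h, Complex.norm_exp_ofReal_mul_I]

/-- The linear propagator `S_τ = 𝓕⁻¹ e^{−iτ|ξ|²} 𝓕` of `i du + Δu ∘ dW = 0`. -/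
def Sprop (F : L2 ≃ₗᵢ[ℂ] L2) (τ : ℝ) : L2 → L2 :=
  fourierMult F (fun ξ : ℝ => Complex.exp (-Complex.I * (τ : ℂ) * (ξ : ℂ) ^ 2))
    (Sprop_symbol_cont τ) (Sprop_symbol_norm τ)

/-!
On the Fourier side `S_x f − f` is multiplication of `𝓕f` by `e^{−ixξ²} − 1`, whose modulus
is at most `|x| ξ² ≤ |x| (1 + ξ²)`. Hence `‖S_x f − f‖²_{H^s} ≤ x² ‖f‖²_{H^{s+2}}` for every `x`,
and integrating against `γ_t`, whose second moment is `t`, gives the claim.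
-/

open ProbabilityTheory

lemma lintegral_ofReal_sq_gaussianReal (v : ℝ≥0) :
    ∫⁻ x, ENNReal.ofReal (x ^ 2) ∂gaussianReal 0 v = v := by
  have hint : Integrable (fun x : ℝ => x ^ 2) (gaussianReal 0 v) :=
    (memLp_id_gaussianReal 2).integrable_sq
  rw [← ofReal_integral_eq_lintegral_ofReal hint (ae_of_all _ fun x => sq_nonneg x),
    ← variance_of_integral_eq_zero aemeasurable_id' integral_id_gaussianReal,
    variance_fun_id_gaussianReal, ENNReal.ofReal_coe_nnreal]

lemma coeFn_fourier_fourierMult_sub (F : L2 ≃ₗᵢ[ℂ] L2) {m : ℝ → ℂ} (hm : Continuous m)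
    (hm1 : ∀ ξ, ‖m ξ‖ ≤ 1) (f : L2) :
    (F (fourierMult F m hm hm1 f - f) : ℝ → ℂ) =ᵐ[volume] fun ξ => (m ξ - 1) * F f ξ := by
  rw [map_sub, fourierMult, F.apply_symm_apply]
  filter_upwards [Lp.coeFn_sub ((memℒp_mul_symbol m hm hm1 (F f)).toLp _) (F f),
    (memℒp_mul_symbol m hm hm1 (F f)).coeFn_toLp] with ξ hsub hmul
  rw [hsub, Pi.sub_apply, hmul, sub_one_mul]

lemma HsNormSq_fourierMult_sub_le (F : L2 ≃ₗᵢ[ℂ] L2) {m : ℝ → ℂ} (hm : Continuous m)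
    (hm1 : ∀ ξ, ‖m ξ‖ ≤ 1) {c k : ℝ} (hmc : ∀ ξ : ℝ, ‖m ξ - 1‖ ^ 2 ≤ c * (1 + |ξ| ^ 2) ^ k)
    (s : ℝ) (f : L2) :
    HsNormSq F s (fourierMult F m hm hm1 f - f) ≤ ENNReal.ofReal c * HsNormSq F (s + k) f := by
  rw [HsNormSq, HsNormSq, ← lintegral_const_mul' _ _ ENNReal.ofReal_ne_top]
  refine lintegral_mono_ae ((coeFn_fourier_fourierMult_sub F hm hm1 f).mono fun ξ hξ => ?_)
  have hw : 0 < 1 + |ξ| ^ 2 := by positivity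
  have hws : 0 ≤ (1 + |ξ| ^ 2) ^ s := by positivity
  have hwsk : 0 ≤ (1 + |ξ| ^ 2) ^ (s + k) := by positivity
  simp only [hξ, ← enorm_eq_nnnorm, ← ofReal_norm, ← ENNReal.ofReal_pow (norm_nonneg _),
    ← ENNReal.ofReal_mul hws, ← ENNReal.ofReal_mul hwsk,
    ← ENNReal.ofReal_mul' (mul_nonneg hwsk (sq_nonneg _))]
  refine ENNReal.ofReal_le_ofReal ?_
  calc (1 + |ξ| ^ 2) ^ s * ‖(m ξ - 1) * F f ξ‖ ^ 2
      = (1 + |ξ| ^ 2) ^ s * ‖m ξ - 1‖ ^ 2 * ‖F f ξ‖ ^ 2 := by rw [norm_mul, mul_pow, mul_assoc]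
    _ ≤ (1 + |ξ| ^ 2) ^ s * (c * (1 + |ξ| ^ 2) ^ k) * ‖F f ξ‖ ^ 2 := by gcongr; exact hmc ξ
    _ = c * ((1 + |ξ| ^ 2) ^ (s + k) * ‖F f ξ‖ ^ 2) := by rw [Real.rpow_add hw]; ring

lemma norm_exp_neg_I_mul_sq_sub_one_sq_le (τ ξ : ℝ) :
    ‖Complex.exp (-Complex.I * τ * ξ ^ 2) - 1‖ ^ 2 ≤ τ ^ 2 * (1 + |ξ| ^ 2) ^ (2 : ℝ) := by
  have harg : -Complex.I * τ * ξ ^ 2 = Complex.I * ((-(τ * ξ ^ 2) : ℝ) : ℂ) := by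
    push_cast; ring
  have hphase := Real.norm_exp_I_mul_ofReal_sub_one_le (x := -(τ * ξ ^ 2))
  rw [← harg, norm_neg, Real.norm_eq_abs, abs_mul, abs_of_nonneg (sq_nonneg ξ)] at hphase
  calc ‖Complex.exp (-Complex.I * τ * ξ ^ 2) - 1‖ ^ 2 ≤ (|τ| * ξ ^ 2) ^ 2 := by gcongr
    _ ≤ (|τ| * (1 + |ξ| ^ 2)) ^ 2 := by gcongr; rw [sq_abs]; linarith
    _ = τ ^ 2 * (1 + |ξ| ^ 2) ^ (2 : ℝ) := by rw [Real.rpow_two, mul_pow, sq_abs]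

lemma HsNormSq_Sprop_sub_le (F : L2 ≃ₗᵢ[ℂ] L2) (τ s : ℝ) (f : L2) :
    HsNormSq F s (Sprop F τ f - f) ≤ ENNReal.ofReal (τ ^ 2) * HsNormSq F (s + 2) f :=
  HsNormSq_fourierMult_sub_le F _ _ (norm_exp_neg_I_mul_sq_sub_one_sq_le τ) s f

open ProbabilityTheory in
theorem stmt_7_general (F : L2 ≃ₗᵢ[ℂ] L2)
    (t : ℝ) (s : ℝ) (f : L2) :
    ∫⁻ x : ℝ, HsNormSq F s (Sprop F x f - f) ∂(gaussianReal 0 t.toNNReal)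
      ≤ ENNReal.ofReal t * HsNormSq F (s + 2) f := by
  calc ∫⁻ x : ℝ, HsNormSq F s (Sprop F x f - f) ∂(gaussianReal 0 t.toNNReal)
      ≤ ∫⁻ x : ℝ, ENNReal.ofReal (x ^ 2) * HsNormSq F (s + 2) f ∂(gaussianReal 0 t.toNNReal) :=
        lintegral_mono fun x => HsNormSq_Sprop_sub_le F x s f
    _ = ENNReal.ofReal t * HsNormSq F (s + 2) f := by
        rw [lintegral_mul_const _ (by fun_prop), lintegral_ofReal_sq_gaussianReal]
        rfl -- `ENNReal.ofReal t` unfolds to `↑t.toNNReal`, also when `t ≤ 0` and `γ_t = δ₀`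

open ProbabilityTheory in
/-- for the centered Gaussian measure `γ_t` with variance `t > 0` and any
`f` with finite `H^{s+2}` norm, the averaged propagator deviation satisfies
`∫ ‖S_x f − f‖²_{H^s} dγ_t(x) ≤ t ‖f‖²_{H^{s+2}}`. -/
theorem stmt_7 (F : L2 ≃ₗᵢ[ℂ] L2) (hF : IsFourierPlancherel F)
    (t : ℝ) (ht : 0 < t) (s : ℝ) (f : L2) (hf : HsNorm F (s + 2) f < ⊤) :
    ∫⁻ x : ℝ, HsNormSq F s (Sprop F x f - f) ∂(gaussianReal 0 t.toNNReal)
      ≤ ENNReal.ofReal t * HsNormSq F (s + 2) f :=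
  stmt_7_general F t s f
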